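/- arXiv:2209.04540 — 2 statements merged into one kernel-verified Lean document; each statement's English description precedes it below -/
import Mathlib

section
/- Let E ⊂ ℝ be a symmetric Cantor set of positive measure (the intersection of stage sets Eₙ as in the Cantor construction with dₙ/ℓₙ → 0). Suppose ν is a positive locally finite measure on ℝ with 𝟙_E ∗ (δ₀ + ν) = 1 a.e. Then ∫_{Eₙ} (𝟙_{Eₙ} ∗ ν) dm ≥ (1/2 − dₙ/(2ℓₙ)) · m(Eₙ) for every n with dₙ < ℓₙ, while ∫_{Eₙ} (𝟙_{Eₙ} ∗ ν) dm → ∫_E (𝟙_E ∗ ν) dm = 0 as n → ∞; hence no such ν exists and E cannot weakly tile its complement by translations. -/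
open MeasureTheory Set

noncomputable section

/-- Lengths of the intervals in the Cantor-type construction: starting from `[0,1]`,
at step `n+1` an open middle interval of length `d n` is removed from each interval
of length `lenSeq d n`, producing intervals of length `lenSeq d (n+1)`. -/
def lenSeq (d : ℕ → ℝ) : ℕ → ℝ
  | 0 => 1
  | n + 1 => (lenSeq d n - d n) / 2

/-- Left endpoints of the intervals of the `n`-th stage set. -/
def ctrs (d : ℕ → ℝ) : ℕ → Finset ℝ
  | 0 => {0}
  | n + 1 => ctrs d n ∪ (ctrs d n).image (· + (lenSeq d (n + 1) + d n))

/-- The `n`-th stage set `Eₙ`: a finite union of closed intervals of length `lenSeq d n`. -/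
def stageE (d : ℕ → ℝ) (n : ℕ) : Set ℝ :=
  ⋃ c ∈ ctrs d n, Set.Icc (c : ℝ) (c + lenSeq d n)

/-- `A_{n+1}`: the union of open middle intervals (of length `d n`) removed from the
intervals of `Eₙ` to form `E_{n+1}`. -/
def removedA (d : ℕ → ℝ) (n : ℕ) : Set ℝ :=
  ⋃ c ∈ ctrs d n, Set.Ioo (c + lenSeq d (n + 1)) (c + lenSeq d (n + 1) + d n)

section aux

variable {d : ℕ → ℝ}

lemma len_pos (hd : ∀ n, 0 < d n ∧ d n < lenSeq d n) (n : ℕ) : 0 < lenSeq d n :=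
  lt_trans (hd n).1 (hd n).2

lemma len_eq (n : ℕ) : lenSeq d n = 2 * lenSeq d (n + 1) + d n := by
  show lenSeq d n = 2 * ((lenSeq d n - d n) / 2) + d n
  ring

lemma ctrs_subset_succ (n : ℕ) : ctrs d n ⊆ ctrs d (n + 1) := by
  show ctrs d n ⊆ ctrs d n ∪ _
  exact Finset.subset_union_left

lemma mem_ctrs_succ {c : ℝ} {n : ℕ} :
    c ∈ ctrs d (n + 1) ↔ c ∈ ctrs d n ∨ ∃ a ∈ ctrs d n, a + (lenSeq d (n + 1) + d n) = c := by
  show c ∈ ctrs d n ∪ (ctrs d n).image (· + (lenSeq d (n + 1) + d n)) ↔ _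
  rw [Finset.mem_union, Finset.mem_image]

lemma mem_stageE {x : ℝ} {n : ℕ} :
    x ∈ stageE d n ↔ ∃ c ∈ ctrs d n, x ∈ Set.Icc c (c + lenSeq d n) := by
  simp only [stageE, Set.mem_iUnion, exists_prop]

lemma nest_one (hd : ∀ n, 0 < d n ∧ d n < lenSeq d n) {n : ℕ} {c : ℝ}
    (hc : c ∈ ctrs d (n + 1)) :
    ∃ a ∈ ctrs d n, a ≤ c ∧ c + lenSeq d (n + 1) ≤ a + lenSeq d n := by
  have h1 := (hd n).1
  have h2 := len_pos hd (n + 1)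
  have h3 := len_eq (d := d) n
  rcases mem_ctrs_succ.mp hc with h | ⟨a, ha, rfl⟩
  · exact ⟨c, h, le_refl _, by linarith⟩
  · exact ⟨a, ha, by linarith, by linarith⟩

lemma nest (hd : ∀ n, 0 < d n ∧ d n < lenSeq d n) {n m : ℕ} (hnm : n ≤ m) :
    ∀ c ∈ ctrs d m, ∃ a ∈ ctrs d n, a ≤ c ∧ c + lenSeq d m ≤ a + lenSeq d n := by
  induction m, hnm using Nat.le_induction with
  | base => exact fun c hc => ⟨c, hc, le_refl _, le_refl _⟩
  | succ m hnm ih =>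
    intro c hc
    obtain ⟨b, hb, hb1, hb2⟩ := nest_one hd hc
    obtain ⟨a, ha, ha1, ha2⟩ := ih b hb
    exact ⟨a, ha, le_trans ha1 hb1, by linarith⟩

lemma sep (hd : ∀ n, 0 < d n ∧ d n < lenSeq d n) :
    ∀ n, ∀ c ∈ ctrs d n, ∀ c' ∈ ctrs d n, c ≠ c' →
      c + lenSeq d n < c' ∨ c' + lenSeq d n < c := by
  intro n
  induction n with
  | zero =>
    intro c hc c' hc' hne
    simp only [ctrs, Finset.mem_singleton] at hc hc'
    exact absurd (hc.trans hc'.symm) hne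
  | succ n ih =>
    have h1 := (hd n).1
    have h2 := len_pos hd (n + 1)
    have h3 := len_eq (d := d) n
    intro c hc c' hc' hne
    rcases mem_ctrs_succ.mp hc with h | ⟨a, ha, rfl⟩ <;>
      rcases mem_ctrs_succ.mp hc' with h' | ⟨a', ha', rfl⟩
    · rcases ih c h c' h' hne with hlt | hlt
      · exact Or.inl (by linarith)
      · exact Or.inr (by linarith)
    · rcases eq_or_ne c a' with rfl | hne'
      · exact Or.inl (by linarith)
      · rcases ih c h a' ha' hne' with hlt | hlt
        · exact Or.inl (by linarith)
        · exact Or.inr (by linarith)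
    · rcases eq_or_ne a c' with rfl | hne'
      · exact Or.inr (by linarith)
      · rcases ih a ha c' h' hne' with hlt | hlt
        · exact Or.inl (by linarith)
        · exact Or.inr (by linarith)
    · have hne' : a ≠ a' := fun h => hne (by rw [h])
      rcases ih a ha a' ha' hne' with hlt | hlt
      · exact Or.inl (by linarith)
      · exact Or.inr (by linarith)

lemma sep_eq (hd : ∀ n, 0 < d n ∧ d n < lenSeq d n) {n : ℕ} {c c' z : ℝ}
    (hc : c ∈ ctrs d n) (hc' : c' ∈ ctrs d n)
    (hz : z ∈ Set.Icc c (c + lenSeq d n)) (hz' : z ∈ Set.Icc c' (c' + lenSeq d n)) :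
    c = c' := by
  by_contra hne
  rcases sep hd n c hc c' hc' hne with h | h
  · linarith [hz.2, hz'.1]
  · linarith [hz.1, hz'.2]

lemma stage_succ_subset (hd : ∀ n, 0 < d n ∧ d n < lenSeq d n) (n : ℕ) :
    stageE d (n + 1) ⊆ stageE d n := by
  intro x hx
  obtain ⟨c, hc, hxc⟩ := mem_stageE.mp hx
  obtain ⟨a, ha, ha1, ha2⟩ := nest_one hd hc
  exact mem_stageE.mpr ⟨a, ha, ⟨le_trans ha1 hxc.1, by linarith [hxc.2]⟩⟩

lemma stage_mono (hd : ∀ n, 0 < d n ∧ d n < lenSeq d n) {n m : ℕ} (hnm : n ≤ m) :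
    stageE d m ⊆ stageE d n := by
  induction m, hnm using Nat.le_induction with
  | base => exact le_refl _
  | succ m hnm ih => exact (stage_succ_subset hd m).trans ih

lemma halves (hd : ∀ n, 0 < d n ∧ d n < lenSeq d n) {n : ℕ} {x : ℝ}
    (hx : x ∈ stageE d (n + 1)) :
    ∃ a ∈ ctrs d n, x ∈ Set.Icc a (a + lenSeq d (n + 1)) ∨
      x ∈ Set.Icc (a + lenSeq d (n + 1) + d n) (a + lenSeq d n) := by
  have h3 := len_eq (d := d) n
  obtain ⟨c, hc, hxc⟩ := mem_stageE.mp hx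
  rcases mem_ctrs_succ.mp hc with h | ⟨a, ha, rfl⟩
  · exact ⟨c, h, Or.inl hxc⟩
  · exact ⟨a, ha, Or.inr ⟨by linarith [hxc.1], by linarith [hxc.2]⟩⟩

lemma position (hd : ∀ n, 0 < d n ∧ d n < lenSeq d n) {n : ℕ} {c x : ℝ}
    (hc : c ∈ ctrs d n) (hx : x ∈ stageE d (n + 1)) (hxI : x ∈ Set.Icc c (c + lenSeq d n)) :
    x ≤ c + lenSeq d (n + 1) ∨ c + lenSeq d (n + 1) + d n ≤ x := by
  have h1 := (hd n).1
  have h2 := len_pos hd (n + 1)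
  have h3 := len_eq (d := d) n
  obtain ⟨a, ha, hcase⟩ := halves hd hx
  have haI : x ∈ Set.Icc a (a + lenSeq d n) := by
    rcases hcase with h | h
    · exact ⟨h.1, by linarith [h.2]⟩
    · exact ⟨by linarith [h.1], h.2⟩
  have hac : a = c := sep_eq hd ha hc haI hxI
  subst hac
  rcases hcase with h | h
  · exact Or.inl h.2
  · exact Or.inr h.1

lemma symCtrs (hd : ∀ n, 0 < d n ∧ d n < lenSeq d n) {n : ℕ} {c : ℝ}
    (hc : c ∈ ctrs d n) :
    ∀ m, n ≤ m → ∀ c' ∈ ctrs d m, c ≤ c' → c' + lenSeq d m ≤ c + lenSeq d n →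
      2 * c + lenSeq d n - lenSeq d m - c' ∈ ctrs d m := by
  intro m hnm
  induction m, hnm using Nat.le_induction with
  | base =>
    intro c' hc' hle hup
    have : c' = c := le_antisymm (by linarith) hle
    subst this
    have : 2 * c' + lenSeq d n - lenSeq d n - c' = c' := by ring
    rw [this]; exact hc
  | succ m hnm ih =>
    have h1 := (hd m).1
    have h2 := len_pos hd (m + 1)
    have h2' := len_pos hd m
    have h2n := len_pos hd n
    have h3 := len_eq (d := d) m
    intro c' hc' hle hup
    rcases mem_ctrs_succ.mp hc' with h | ⟨a, ha, rfl⟩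
    · obtain ⟨a₀, ha₀, ha₀1, ha₀2⟩ := nest hd hnm c' h
      have hac : a₀ = c := by
        by_contra hne
        rcases sep hd n a₀ ha₀ c hc hne with hlt | hlt <;> linarith
      rw [hac] at ha₀2
      have hres := ih c' h hle ha₀2
      have heq : 2 * c + lenSeq d n - lenSeq d (m + 1) - c' =
          (2 * c + lenSeq d n - lenSeq d m - c') + (lenSeq d (m + 1) + d m) := by linarith
      rw [heq]
      exact mem_ctrs_succ.mpr (Or.inr ⟨_, hres, rfl⟩)
    · obtain ⟨a₀, ha₀, ha₀1, ha₀2⟩ := nest hd hnm a ha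
      have hac : a₀ = c := by
        by_contra hne
        rcases sep hd n a₀ ha₀ c hc hne with hlt | hlt <;> linarith
      rw [hac] at ha₀1 ha₀2
      have hres := ih a ha (by linarith) (by linarith)
      have heq : 2 * c + lenSeq d n - lenSeq d (m + 1) - (a + (lenSeq d (m + 1) + d m)) =
          2 * c + lenSeq d n - lenSeq d m - a := by linarith
      rw [heq]
      exact ctrs_subset_succ m hres

lemma symStage (hd : ∀ n, 0 < d n ∧ d n < lenSeq d n) {n m : ℕ} (hnm : n ≤ m) {c x : ℝ}
    (hc : c ∈ ctrs d n) (hxI : x ∈ Set.Icc c (c + lenSeq d n)) (hx : x ∈ stageE d m) :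
    2 * c + lenSeq d n - x ∈ stageE d m := by
  have h2 := len_pos hd m
  have h2n := len_pos hd n
  obtain ⟨c', hc', hxc'⟩ := mem_stageE.mp hx
  obtain ⟨a₀, ha₀, ha₀1, ha₀2⟩ := nest hd hnm c' hc'
  have hac : a₀ = c := by
    by_contra hne
    rcases sep hd n a₀ ha₀ c hc hne with hlt | hlt <;>
      [linarith [hxc'.1, hxc'.2, hxI.1, hxI.2]; linarith [hxc'.1, hxc'.2, hxI.1, hxI.2]]
  rw [hac] at ha₀1 ha₀2
  have hres := symCtrs hd hc m hnm c' hc' ha₀1 ha₀2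
  exact mem_stageE.mpr ⟨_, hres, ⟨by linarith [hxc'.2], by linarith [hxc'.1]⟩⟩

lemma symE (hd : ∀ n, 0 < d n ∧ d n < lenSeq d n) {n : ℕ} {c x : ℝ}
    (hc : c ∈ ctrs d n) (hxI : x ∈ Set.Icc c (c + lenSeq d n))
    (hx : x ∈ ⋂ m, stageE d m) :
    2 * c + lenSeq d n - x ∈ ⋂ m, stageE d m := by
  rw [Set.mem_iInter] at hx ⊢
  intro m
  have h := symStage hd (le_max_left n m) hc hxI (hx (max n m))
  exact stage_mono hd (le_max_right n m) h

lemma key (hd : ∀ n, 0 < d n ∧ d n < lenSeq d n) {n : ℕ} {c x y t : ℝ}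
    (hc : c ∈ ctrs d n) (hx : x ∈ Set.Icc c (c + lenSeq d (n + 1)))
    (hy : y ∈ Set.Ioo (c + lenSeq d (n + 1)) (c + lenSeq d (n + 1) + d n))
    (he : y - t ∈ stageE d (n + 1)) :
    x - t ∈ stageE d n ∨ (2 * c + lenSeq d n - x) - t ∈ stageE d n := by
  have h1 := (hd n).1
  have h2 := len_pos hd (n + 1)
  have h3 := len_eq (d := d) n
  obtain ⟨a, ha, hcase⟩ := halves hd he
  rcases hcase with hL | hR
  · right
    exact mem_stageE.mpr ⟨a, ha,
      ⟨by linarith [hL.1, hx.1, hx.2, hy.1, hy.2], by linarith [hL.2, hx.1, hx.2, hy.1, hy.2]⟩⟩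
  · left
    exact mem_stageE.mpr ⟨a, ha,
      ⟨by linarith [hR.1, hx.1, hx.2, hy.1, hy.2], by linarith [hR.2, hx.1, hx.2, hy.1, hy.2]⟩⟩

end aux

/-- A symmetric Cantor set of positive measure cannot weakly tile its complement:
no positive locally finite measure `ν` satisfies `𝟙_E ∗ (δ₀ + ν) = 1` a.e. -/
theorem symCantor_no_weak_tiling (d : ℕ → ℝ)
    (hd : ∀ n, 0 < d n ∧ d n < lenSeq d n)
    (hpos : 0 < volume (⋂ n, stageE d n))
    (ν : Measure ℝ) (hν : IsLocallyFiniteMeasure ν)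
    (hwt : ∀ᵐ x : ℝ,
      Set.indicator (⋂ n, stageE d n) (fun _ => (1 : ℝ)) x
        + (∫ t, Set.indicator (⋂ n, stageE d n) (fun _ => (1 : ℝ)) (x - t) ∂ν) = 1) :
    False := by
  classical
  haveI := hν
  set E : Set ℝ := ⋂ n, stageE d n with hE
  have hstage_meas : ∀ n, MeasurableSet (stageE d n) := fun n =>
    Finset.measurableSet_biUnion _ (fun c _ => measurableSet_Icc)
  have hE_meas : MeasurableSet E := MeasurableSet.iInter fun n => hstage_meas n
  have hE_sub : ∀ n, E ⊆ stageE d n := fun n => Set.iInter_subset _ n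
  have hstage0 : stageE d 0 = Set.Icc (0 : ℝ) 1 := by
    have : lenSeq d 0 = 1 := rfl
    simp [stageE, ctrs, this]
  have hE01 : E ⊆ Set.Icc (0 : ℝ) 1 := by rw [← hstage0]; exact hE_sub 0
  -- the translated preimage sets
  set Sn : ℕ → ℝ → Set ℝ := fun n x => (fun t => x - t) ⁻¹' stageE d n with hSn
  set S : ℝ → Set ℝ := fun x => (fun t => x - t) ⁻¹' E with hS
  have hSn_meas : ∀ n x, MeasurableSet (Sn n x) := fun n x =>
    (measurable_const.sub measurable_id) (hstage_meas n)
  have hS_meas : ∀ x, MeasurableSet (S x) := fun x =>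
    (measurable_const.sub measurable_id) hE_meas
  have hS_sub : ∀ x, S x ⊆ Set.Icc (x - 1) x := by
    intro x t ht
    have h : x - t ∈ Set.Icc (0 : ℝ) 1 := hE01 ht
    rw [Set.mem_Icc] at h
    rw [Set.mem_Icc]
    constructor <;> linarith [h.1, h.2]
  have hSn0_sub : ∀ x, Sn 0 x ⊆ Set.Icc (x - 1) x := by
    intro x t ht
    have h : x - t ∈ Set.Icc (0 : ℝ) 1 := by
      rw [← hstage0]; exact ht
    rw [Set.mem_Icc] at h
    rw [Set.mem_Icc]
    constructor <;> linarith [h.1, h.2]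
  have hfinIcc : ∀ a b : ℝ, ν (Set.Icc a b) ≠ ⊤ := fun a b =>
    (IsCompact.measure_lt_top isCompact_Icc).ne
  have hfinS : ∀ x, ν (S x) ≠ ⊤ := fun x =>
    ne_top_of_le_ne_top (hfinIcc _ _) (measure_mono (hS_sub x))
  have hfinSn0 : ∀ x, ν (Sn 0 x) ≠ ⊤ := fun x =>
    ne_top_of_le_ne_top (hfinIcc _ _) (measure_mono (hSn0_sub x))
  -- rewrite the convolution integral
  have hint : ∀ x : ℝ, (∫ t, Set.indicator E (fun _ => (1 : ℝ)) (x - t) ∂ν)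
      = (ν (S x)).toReal := by
    intro x
    have heq : ∀ t : ℝ, Set.indicator E (fun _ => (1 : ℝ)) (x - t)
        = Set.indicator (S x) (fun _ => (1 : ℝ)) t := by
      intro t
      by_cases h : x - t ∈ E
      · rw [Set.indicator_of_mem h, Set.indicator_of_mem (by exact h)]
      · rw [Set.indicator_of_notMem h, Set.indicator_of_notMem (by exact h)]
    simp_rw [heq]
    rw [integral_indicator_const (1 : ℝ) (hS_meas x), smul_eq_mul, mul_one]
    rfl
  have hae : ∀ᵐ x : ℝ, Set.indicator E (fun _ => (1 : ℝ)) x + (ν (S x)).toReal = 1 :=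
    hwt.mono fun x h => by rwa [hint x] at h
  have h0 : ∀ᵐ x : ℝ, x ∈ E → ν (S x) = 0 := by
    refine hae.mono fun x h hx => ?_
    rw [Set.indicator_of_mem hx] at h
    have h' : (ν (S x)).toReal = 0 := by linarith
    rcases (ENNReal.toReal_eq_zero_iff _).mp h' with h'' | h''
    · exact h''
    · exact absurd h'' (hfinS x)
  have h1 : ∀ᵐ x : ℝ, x ∉ E → ν (S x) = 1 := by
    refine hae.mono fun x h hx => ?_
    rw [Set.indicator_of_notMem hx] at h
    have h' : (ν (S x)).toReal = 1 := by linarith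
    have := ENNReal.ofReal_toReal (hfinS x)
    rw [h'] at this
    rw [← this]; norm_num
  -- measurability of x ↦ ν (Sn n x)
  have hGmeas : ∀ n, Measurable fun x => ν (Sn n x) := by
    intro n
    have hs : MeasurableSet {p : ℝ × ℝ | p.1 - p.2 ∈ stageE d n} :=
      (measurable_fst.sub measurable_snd) (hstage_meas n)
    exact measurable_measure_prodMk_left (ν := ν) hs
  -- lower bound: volume E ≤ 2 * ∫⁻_E ν (Sn n x) for every n
  have hlow : ∀ n, volume E ≤ 2 * ∫⁻ x in E, ν (Sn n x) := by
    intro n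
    have hd1 := (hd n).1
    have hl' := len_pos hd (n + 1)
    have hleq := len_eq (d := d) n
    -- choose a gap point y c for every c ∈ ctrs d n
    have hNE : ∀ c ∈ ctrs d n, ∃ y : ℝ,
        y ∈ Set.Ioo (c + lenSeq d (n + 1)) (c + lenSeq d (n + 1) + d n) ∧ ν (S y) = 1 := by
      intro c hc
      have hnull : volume {x : ℝ | ¬ (x ∉ E → ν (S x) = 1)} = 0 := by
        simpa [ae_iff] using h1
      have hgap : (0 : ENNReal) < volume (Set.Ioo (c + lenSeq d (n + 1))
          (c + lenSeq d (n + 1) + d n)) := by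
        rw [Real.volume_Ioo]
        simp only [ENNReal.ofReal_pos]
        linarith
      have hnots : ¬ (Set.Ioo (c + lenSeq d (n + 1)) (c + lenSeq d (n + 1) + d n)
          ⊆ {x : ℝ | ¬ (x ∉ E → ν (S x) = 1)}) := by
        intro hsub
        exact absurd (measure_mono_null hsub hnull) hgap.ne'
      obtain ⟨y, hy, hyT⟩ := Set.not_subset.mp hnots
      rw [Set.mem_setOf_eq, not_not] at hyT
      have hynotE : y ∉ E := by
        intro hyE
        have hyI : y ∈ Set.Icc c (c + lenSeq d n) :=
          ⟨by linarith [hy.1], by linarith [hy.2]⟩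
        rcases position hd hc (hE_sub (n + 1) hyE) hyI with h | h
        · linarith [hy.1]
        · linarith [hy.2]
      exact ⟨y, hy, hyT hynotE⟩
    choose! y hyIoo hyν using hNE
    -- pointwise inequality on E ∩ I_c
    have hpt : ∀ c ∈ ctrs d n, ∀ x ∈ E ∩ Set.Icc c (c + lenSeq d n),
        1 ≤ ν (Sn n x) + ν (Sn n (2 * c + lenSeq d n - x)) := by
      intro c hc x hx
      obtain ⟨hxE, hxI⟩ := hx
      have hmain : ∀ u : ℝ, u ∈ Set.Icc c (c + lenSeq d (n + 1)) →
          S (y c) ⊆ Sn n u ∪ Sn n (2 * c + lenSeq d n - u) := by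
        intro u hu t ht
        have he : y c - t ∈ stageE d (n + 1) := hE_sub (n + 1) ht
        rcases key hd hc hu (hyIoo c hc) he with h | h
        · exact Or.inl h
        · exact Or.inr h
      have hcalc : ∀ u : ℝ, u ∈ Set.Icc c (c + lenSeq d (n + 1)) →
          1 ≤ ν (Sn n u) + ν (Sn n (2 * c + lenSeq d n - u)) := by
        intro u hu
        calc (1 : ENNReal) = ν (S (y c)) := (hyν c hc).symm
          _ ≤ ν (Sn n u ∪ Sn n (2 * c + lenSeq d n - u)) := measure_mono (hmain u hu)
          _ ≤ ν (Sn n u) + ν (Sn n (2 * c + lenSeq d n - u)) := measure_union_le _ _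
      rcases position hd hc (hE_sub (n + 1) hxE) hxI with hL | hR
      · exact hcalc x ⟨hxI.1, hL⟩
      · have hx' : 2 * c + lenSeq d n - x ∈ Set.Icc c (c + lenSeq d (n + 1)) :=
          ⟨by linarith [hxI.2], by linarith⟩
        have := hcalc _ hx'
        have heq : 2 * c + lenSeq d n - (2 * c + lenSeq d n - x) = x := by ring
        rw [heq] at this
        rw [add_comm]
        exact this
    -- per-interval integral bound
    have per : ∀ c ∈ ctrs d n, volume (E ∩ Set.Icc c (c + lenSeq d n))
        ≤ 2 * ∫⁻ x in E ∩ Set.Icc c (c + lenSeq d n), ν (Sn n x) := by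
      intro c hc
      set A := E ∩ Set.Icc c (c + lenSeq d n) with hA
      have hA_meas : MeasurableSet A := hE_meas.inter measurableSet_Icc
      set r : ℝ → ℝ := fun x => 2 * c + lenSeq d n - x with hr
      have hrA : r ⁻¹' A = A := by
        ext z
        simp only [Set.mem_preimage, hr, hA, Set.mem_inter_iff, Set.mem_Icc]
        constructor
        · rintro ⟨hzE, hz1, hz2⟩
          have := symE hd hc (⟨by linarith, by linarith⟩ :
            2 * c + lenSeq d n - z ∈ Set.Icc c (c + lenSeq d n)) hzE
          have heq : 2 * c + lenSeq d n - (2 * c + lenSeq d n - z) = z := by ring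
          rw [heq] at this
          exact ⟨this, by linarith, by linarith⟩
        · rintro ⟨hzE, hz1, hz2⟩
          exact ⟨symE hd hc ⟨hz1, hz2⟩ hzE, by linarith, by linarith⟩
      have hmp : MeasurePreserving r volume volume :=
        Measure.measurePreserving_sub_left volume (2 * c + lenSeq d n)
      have hemb : MeasurableEmbedding r := by
        have : r = ⇑(MeasurableEquiv.subLeft (2 * c + lenSeq d n)) := rfl
        rw [this]
        exact (MeasurableEquiv.subLeft (2 * c + lenSeq d n)).measurableEmbedding
      have hchg : (∫⁻ x in A, ν (Sn n (r x))) = ∫⁻ x in A, ν (Sn n x) := by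
        have := hmp.setLIntegral_comp_preimage_emb hemb (fun x => ν (Sn n x)) A
        rw [hrA] at this
        exact this
      calc volume A = ∫⁻ _ in A, 1 := (setLIntegral_one A).symm
        _ ≤ ∫⁻ x in A, (ν (Sn n x) + ν (Sn n (r x))) :=
          setLIntegral_mono' hA_meas (fun x hx => hpt c hc x hx)
        _ = (∫⁻ x in A, ν (Sn n x)) + ∫⁻ x in A, ν (Sn n (r x)) :=
          lintegral_add_left (hGmeas n) _
        _ = 2 * ∫⁻ x in A, ν (Sn n x) := by rw [hchg, two_mul]
    -- sum over the intervals
    have hdisj : (↑(ctrs d n) : Set ℝ).PairwiseDisjoint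
        (fun c => E ∩ Set.Icc c (c + lenSeq d n)) := by
      intro c hc c' hc' hne
      rw [Function.onFun, Set.disjoint_left]
      rintro z ⟨hzE, hzI⟩ ⟨hzE', hzI'⟩
      exact hne (sep_eq hd hc hc' hzI hzI')
    have hAm : ∀ c ∈ ctrs d n, MeasurableSet (E ∩ Set.Icc c (c + lenSeq d n)) :=
      fun c _ => hE_meas.inter measurableSet_Icc
    have hcover : E = ⋃ c ∈ ctrs d n, E ∩ Set.Icc c (c + lenSeq d n) := by
      ext z
      simp only [Set.mem_iUnion, Set.mem_inter_iff, exists_prop]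
      constructor
      · intro hz
        obtain ⟨c, hc, hzc⟩ := mem_stageE.mp (hE_sub n hz)
        exact ⟨c, hc, hz, hzc⟩
      · rintro ⟨c, hc, hz, _⟩
        exact hz
    have hsplit : (∫⁻ x in E, ν (Sn n x))
        = ∑ c ∈ ctrs d n, ∫⁻ x in E ∩ Set.Icc c (c + lenSeq d n), ν (Sn n x) := by
      conv_lhs => rw [hcover]
      exact lintegral_biUnion_finset hdisj hAm _
    calc volume E = ∑ c ∈ ctrs d n, volume (E ∩ Set.Icc c (c + lenSeq d n)) := by
          conv_lhs => rw [hcover]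
          exact measure_biUnion_finset hdisj hAm
      _ ≤ ∑ c ∈ ctrs d n, 2 * ∫⁻ x in E ∩ Set.Icc c (c + lenSeq d n), ν (Sn n x) :=
          Finset.sum_le_sum per
      _ = 2 * ∑ c ∈ ctrs d n, ∫⁻ x in E ∩ Set.Icc c (c + lenSeq d n), ν (Sn n x) :=
          (Finset.mul_sum _ _ _).symm
      _ = 2 * ∫⁻ x in E, ν (Sn n x) := by rw [hsplit]
  -- the integrals have infimum ∫⁻_E ν (S x) = 0
  have hanti : Antitone fun n : ℕ => fun x : ℝ => ν (Sn n x) := by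
    intro n m hnm
    exact fun x => measure_mono (Set.preimage_mono (stage_mono hd hnm))
  have hfin0' : (∫⁻ x in E, ν (Sn 0 x)) ≠ ⊤ := by
    have hb : ∀ x ∈ E, ν (Sn 0 x) ≤ ν (Set.Icc (-1 : ℝ) 1) := by
      intro x hx
      refine measure_mono (fun t ht => ?_)
      have h1 := hSn0_sub x ht
      have h2 := hE01 hx
      rw [Set.mem_Icc] at h1 h2 ⊢
      constructor <;> linarith [h1.1, h1.2, h2.1, h2.2]
    have hle : (∫⁻ x in E, ν (Sn 0 x)) ≤ ν (Set.Icc (-1 : ℝ) 1) * volume E := by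
      calc (∫⁻ x in E, ν (Sn 0 x)) ≤ ∫⁻ _ in E, ν (Set.Icc (-1 : ℝ) 1) :=
            setLIntegral_mono' hE_meas hb
        _ = ν (Set.Icc (-1 : ℝ) 1) * volume E := by rw [setLIntegral_const]
    refine ne_top_of_le_ne_top (ENNReal.mul_ne_top (hfinIcc _ _) ?_) hle
    have hv : volume E ≤ volume (Set.Icc (0 : ℝ) 1) := measure_mono hE01
    refine ne_top_of_le_ne_top ?_ hv
    rw [Real.volume_Icc]
    exact ENNReal.ofReal_ne_top
  have hiInf : (⨅ n, ∫⁻ x in E, ν (Sn n x)) = ∫⁻ x in E, ν (S x) := by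
    rw [← lintegral_iInf (fun n => hGmeas n) hanti hfin0']
    refine lintegral_congr fun x => ?_
    have hanti' : Antitone (fun n : ℕ => Sn n x) := fun n m hnm =>
      Set.preimage_mono (stage_mono hd hnm)
    have hdir : Directed (· ⊇ ·) (fun n : ℕ => Sn n x) := hanti'.directed_ge
    have hSx : S x = ⋂ n, Sn n x := by
      show (fun t => x - t) ⁻¹' (⋂ n, stageE d n) = _
      exact Set.preimage_iInter
    rw [hSx]
    exact (Directed.measure_iInter (fun n => (hSn_meas n x).nullMeasurableSet) hdir
      ⟨0, hfinSn0 x⟩).symm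
  have hzero : (∫⁻ x in E, ν (S x)) = 0 := by
    have hres : ∀ᵐ x ∂(volume.restrict E), ν (S x) = 0 := (ae_restrict_iff' hE_meas).mpr h0
    calc (∫⁻ x in E, ν (S x)) = ∫⁻ _ in E, 0 := lintegral_congr_ae hres
      _ = 0 := lintegral_zero
  -- contradiction
  have h2pos : (0 : ENNReal) < volume E / 2 := ENNReal.div_pos hpos.ne' (by norm_num)
  obtain ⟨n, hn⟩ : ∃ n, (∫⁻ x in E, ν (Sn n x)) < volume E / 2 := by
    have hiz : (⨅ n, ∫⁻ x in E, ν (Sn n x)) < volume E / 2 := by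
      rw [hiInf, hzero]; exact h2pos
    exact iInf_lt_iff.mp hiz
  have hmul : (2 : ENNReal) * (∫⁻ x in E, ν (Sn n x)) < 2 * (volume E / 2) :=
    (ENNReal.mul_lt_mul_iff_right (by norm_num) (by norm_num)).mpr hn
  have heq2 : (2 : ENNReal) * (volume E / 2) = volume E :=
    ENNReal.mul_div_cancel' (by norm_num) (by norm_num)
  rw [heq2] at hmul
  exact absurd (lt_of_le_of_lt (hlow n) hmul) (lt_irrefl _)
end
end

section
/- There exists an unbounded, nowhere dense set E ⊂ ℝ of finite positive measure that tiles ℝ by ℤ-translates: Σ_{n∈ℤ} 𝟙_E(x − n) = 1 for almost every x ∈ ℝ. Such a set can be obtained as E = ⋃_{n∈ℤ} (Eₙ + n), where {Eₙ}_{n∈ℤ} is a family of pairwise disjoint (up to measure zero) nowhere dense compact subsets of [0,1] with Σₙ 𝟙_{Eₙ} = 𝟙_{[0,1]} a.e. -/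
open MeasureTheory Set
open scoped ENNReal NNReal

noncomputable section
namespace FatTile

def q : ℕ → ℚ := (Denumerable.eqv ℚ).symm

lemma q_surj : Function.Surjective q := (Denumerable.eqv ℚ).symm.surjective

def r (j k : ℕ) : ℝ := (2:ℝ)⁻¹ ^ (j + k + 3)

lemma r_pos (j k : ℕ) : 0 < r j k := by unfold r; positivity

lemma r_anti {j j' k : ℕ} (h : j ≤ j') : r j' k ≤ r j k := by
  apply pow_le_pow_of_le_one (by norm_num) (by norm_num); omega

def I (j k : ℕ) : Set ℝ := Ioo ((q k:ℝ) - r j k) ((q k:ℝ) + r j k)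

lemma I_anti {j j' k : ℕ} (h : j ≤ j') : I j' k ⊆ I j k := by
  apply Ioo_subset_Ioo <;> have := r_anti (k := k) h <;> linarith

def U (j : ℕ) : Set ℝ := ⋃ k, I j k

lemma U_open (j : ℕ) : IsOpen (U j) := isOpen_iUnion fun _ => isOpen_Ioo

lemma U_anti {j j' : ℕ} (h : j ≤ j') : U j' ⊆ U j := iUnion_mono fun _ => I_anti h

lemma U_dense (j : ℕ) : Dense (U j) := by
  have hsub : Set.range ((↑) : ℚ → ℝ) ⊆ U j := by
    rintro x ⟨a, rfl⟩
    obtain ⟨k, rfl⟩ := q_surj a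
    exact mem_iUnion.2 ⟨k, by constructor <;> [skip; skip] <;> linarith [r_pos j k]⟩
  exact Rat.denseRange_cast.mono hsub

def C (j : ℕ) : Set ℝ := Icc 0 1 \ U j

lemma C_subset_Icc (j : ℕ) : C j ⊆ Icc 0 1 := diff_subset

lemma C_closed (j : ℕ) : IsClosed (C j) := isClosed_Icc.sdiff (U_open j)

lemma C_compact (j : ℕ) : IsCompact (C j) :=
  isCompact_Icc.of_isClosed_subset (C_closed j) (C_subset_Icc j)

lemma C_mono {j j' : ℕ} (h : j ≤ j') : C j ⊆ C j' :=
  diff_subset_diff_right (U_anti h)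

lemma C_inter_U {j j' : ℕ} (h : j ≤ j') : C j ∩ U j' = ∅ := by
  rw [eq_empty_iff_forall_notMem]
  rintro x ⟨hc, hu⟩
  exact hc.2 (U_anti h hu)

lemma C_nwd (j : ℕ) : IsNowhereDense (C j) := by
  rw [(C_closed j).isNowhereDense_iff, eq_empty_iff_forall_notMem]
  intro x hx
  obtain ⟨y, hyU, hyC⟩ := (U_dense j).exists_mem_open isOpen_interior ⟨x, hx⟩
  exact (interior_subset hyC).2 hyU

/-- subsets of closed nowhere dense sets are nowhere dense -/
lemma nwd_of_subset {s t : Set ℝ} (h : s ⊆ t) (hnd : IsNowhereDense t) :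
    IsNowhereDense s := by
  rw [IsNowhereDense] at *
  have h2 : closure s ⊆ closure t := closure_mono h
  exact eq_empty_of_subset_empty (hnd ▸ interior_mono h2)

/-- the union of two closed nowhere dense sets is nowhere dense -/
lemma nwd_union {s t : Set ℝ} (hs : IsClosed s) (ht : IsClosed t)
    (hnds : IsNowhereDense s) (hndt : IsNowhereDense t) :
    IsNowhereDense (s ∪ t) := by
  rw [(hs.union ht).isNowhereDense_iff]
  rw [hs.isNowhereDense_iff] at hnds
  rw [ht.isNowhereDense_iff] at hndt
  rw [eq_empty_iff_forall_notMem]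
  intro x hx
  have hopen : IsOpen (interior (s ∪ t) \ s) := isOpen_interior.sdiff hs
  have hsub : interior (s ∪ t) \ s ⊆ t := by
    rintro y ⟨hy, hys⟩
    rcases interior_subset hy with h | h
    · exact absurd h hys
    · exact h
  have hempty : interior (s ∪ t) \ s = ∅ := by
    have h4 := interior_maximal hsub hopen
    exact eq_empty_of_subset_empty (hndt ▸ h4)
  have hxs : interior (s ∪ t) ⊆ s := by
    intro y hy
    by_contra hys
    rw [eq_empty_iff_forall_notMem] at hempty
    exact hempty y ⟨hy, hys⟩
  have : interior (s ∪ t) ⊆ interior s := interior_maximal hxs isOpen_interior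
  rw [hnds] at this
  exact this hx

/-- an open set contained in a finite union of closed nowhere dense sets is empty -/
lemma open_subset_finite_nwd {ι : Type*} (s : Finset ι) (A : ι → Set ℝ)
    (hA : ∀ i, IsClosed (A i)) (hnd : ∀ i, IsNowhereDense (A i)) :
    ∀ V : Set ℝ, IsOpen V → V ⊆ ⋃ i ∈ s, A i → V = ∅ := by
  classical
  induction s using Finset.induction_on with
  | empty => intro V _ h; simpa using subset_empty_iff.1 (by simpa using h)
  | @insert a s ha ih =>
    intro V hV hsub
    have h1 : V \ A a = ∅ := by
      apply ih (V \ A a) (hV.sdiff (hA a))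
      rintro x ⟨hx, hxa⟩
      rcases mem_iUnion₂.1 (hsub hx) with ⟨i, hi, hxi⟩
      rcases Finset.mem_insert.1 hi with rfl | hi'
      · exact absurd hxi hxa
      · exact mem_iUnion₂.2 ⟨i, hi', hxi⟩
    have h2 : V ⊆ A a := by
      intro x hx
      by_contra hxa
      rw [eq_empty_iff_forall_notMem] at h1
      exact h1 x ⟨hx, hxa⟩
    have h3 : V ⊆ interior (A a) := interior_maximal h2 hV
    rw [(hA a).isNowhereDense_iff.1 (hnd a)] at h3
    exact eq_empty_of_subset_empty h3

def Kk (j k : ℕ) : Set ℝ := ⋃ i ∈ Finset.range k, Icc ((q i:ℝ) - r j i) ((q i:ℝ) + r j i)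

lemma Kk_closed (j k : ℕ) : IsClosed (Kk j k) := by
  apply Set.Finite.isClosed_biUnion (Finset.finite_toSet _)
  intros; exact isClosed_Icc

def J (j k : ℕ) : Set ℝ := I j k \ Kk j k

def T : Set ℝ := ⋃ j, ⋃ k, ({(q k:ℝ) - r j k, (q k:ℝ) + r j k} : Set ℝ)

lemma T_countable : T.Countable :=
  Set.countable_iUnion fun _ => Set.countable_iUnion fun _ =>
    ((Set.finite_singleton _).insert _).countable

lemma T_null : volume T = 0 := T_countable.measure_zero _

lemma endpoint_mem_T {j k : ℕ} {x : ℝ}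
    (h : x ∈ Icc ((q k:ℝ) - r j k) ((q k:ℝ) + r j k)) (h2 : x ∉ I j k) : x ∈ T := by
  have hx : x = (q k:ℝ) - r j k ∨ x = (q k:ℝ) + r j k := by
    rcases h with ⟨h1', h2'⟩
    rw [I, mem_Ioo, not_and_or, not_lt, not_lt] at h2
    rcases h2 with h | h
    · left; linarith
    · right; linarith
  exact mem_iUnion.2 ⟨j, mem_iUnion.2 ⟨k, by rcases hx with h|h <;> simp [h]⟩⟩

lemma closure_J_subset (j k : ℕ) : closure (J j k) ⊆ J j k ∪ T := by
  intro x hx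
  by_cases hJ : x ∈ J j k
  · exact Or.inl hJ
  right
  have hIcc : x ∈ Icc ((q k:ℝ) - r j k) ((q k:ℝ) + r j k) :=
    closure_minimal (fun y hy => Ioo_subset_Icc_self hy.1) isClosed_Icc hx
  by_cases hI : x ∈ I j k
  · have hK : x ∈ Kk j k := by
      by_contra hK; exact hJ ⟨hI, hK⟩
    rw [Kk, mem_iUnion₂] at hK
    obtain ⟨i, hi, hxi⟩ := hK
    apply endpoint_mem_T hxi
    intro hIoo
    have hnb : I j i ∈ nhds x := isOpen_Ioo.mem_nhds hIoo
    obtain ⟨y, hyI, hyJ⟩ := mem_closure_iff_nhds.1 hx _ hnb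
    exact hyJ.2 (mem_iUnion₂.2 ⟨i, hi, Ioo_subset_Icc_self hyI⟩)
  · exact endpoint_mem_T hIcc hI

lemma U_diff_T_subset (j : ℕ) : U j \ T ⊆ ⋃ k, J j k := by
  rintro x ⟨hU, hT⟩
  rw [U, mem_iUnion] at hU
  have hex : ∃ k, x ∈ I j k := hU
  classical
  have hk : x ∈ I j (Nat.find hex) := Nat.find_spec hex
  refine mem_iUnion.2 ⟨Nat.find hex, hk, ?_⟩
  intro hK
  rw [Kk, mem_iUnion₂] at hK
  obtain ⟨i, hi, hxi⟩ := hK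
  exact hT (endpoint_mem_T hxi (Nat.find_min hex (Finset.mem_range.1 hi)))

lemma J_disjoint {j k k' : ℕ} (h : k ≠ k') : J j k ∩ J j k' = ∅ := by
  rw [eq_empty_iff_forall_notMem]
  rintro x ⟨⟨hI1, hK1⟩, ⟨hI2, hK2⟩⟩
  rcases Nat.lt_or_ge k k' with hlt | hge
  · exact hK2 (mem_iUnion₂.2 ⟨k, Finset.mem_range.2 hlt, Ioo_subset_Icc_self hI1⟩)
  · exact hK1 (mem_iUnion₂.2 ⟨k', Finset.mem_range.2 (lt_of_le_of_ne hge (Ne.symm h)),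
      Ioo_subset_Icc_self hI2⟩)

lemma vol_U_le (j : ℕ) : volume (U j) ≤ (2:ℝ≥0∞)⁻¹ ^ (j + 1) := by
  calc volume (U j) ≤ ∑' k, volume (I j k) := measure_iUnion_le _
    _ = ∑' k : ℕ, (2:ℝ≥0∞)⁻¹ ^ (j + k + 2) := by
        congr 1; ext k
        rw [I, Real.volume_Ioo]
        have h1 : (q k:ℝ) + r j k - ((q k:ℝ) - r j k) = 2 * (2:ℝ)⁻¹ ^ (j + k + 3) := by
          rw [r]; ring
        rw [h1, show (2:ℝ) * (2:ℝ)⁻¹ ^ (j + k + 3) = (2:ℝ)⁻¹ ^ (j + k + 2) by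
          rw [pow_succ]; ring]
        rw [ENNReal.ofReal_pow (by norm_num : (0:ℝ) ≤ 2⁻¹)]
        congr 1
        rw [ENNReal.ofReal_inv_of_pos (by norm_num : (0:ℝ) < 2)]
        norm_num
    _ = (2:ℝ≥0∞)⁻¹ ^ (j + 1) := by
        have h : ∀ k : ℕ, (2:ℝ≥0∞)⁻¹ ^ (j + k + 2) = (2:ℝ≥0∞)⁻¹ ^ (j+2) * (2:ℝ≥0∞)⁻¹ ^ k := by
          intro k; rw [← pow_add]; ring_nf
        simp_rw [h]
        rw [ENNReal.tsum_mul_left, ENNReal.tsum_geometric]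
        have h2 : (1 - (2:ℝ≥0∞)⁻¹)⁻¹ = 2 := by
          rw [ENNReal.one_sub_inv_two]; simp
        rw [h2, pow_succ, mul_assoc, ENNReal.inv_mul_cancel (by norm_num) (by norm_num), mul_one]

lemma vol_iInter_U : volume (⋂ j, U j) = 0 := by
  have hle : ∀ j : ℕ, volume (⋂ i, U i) ≤ (2:ℝ≥0∞)⁻¹ ^ (j + 1) :=
    fun j => le_trans (measure_mono (iInter_subset _ j)) (vol_U_le j)
  have htend := (ENNReal.tendsto_pow_atTop_nhds_zero_of_lt_one
    (by norm_num : (2:ℝ≥0∞)⁻¹ < 1)).comp (Filter.tendsto_add_atTop_nat 1)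
  exact le_antisymm (ge_of_tendsto' htend hle) zero_le

/-- the pieces -/
def g : ℕ → Set ℝ
  | 0 => C 0
  | (s+1) => C ((Nat.pairEquiv.symm s).1 + 1) ∩
      closure (J (Nat.pairEquiv.symm s).1 (Nat.pairEquiv.symm s).2)

lemma g_compact (s : ℕ) : IsCompact (g s) := by
  cases s with
  | zero => exact C_compact 0
  | succ s => exact (C_compact _).inter_right isClosed_closure

lemma g_closed (s : ℕ) : IsClosed (g s) := (g_compact s).isClosed

lemma g_subset_C : ∀ s : ℕ, ∃ j, g s ⊆ C j := by
  intro s; cases s with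
  | zero => exact ⟨0, subset_rfl⟩
  | succ s => exact ⟨_, inter_subset_left⟩

lemma g_nwd (s : ℕ) : IsNowhereDense (g s) := by
  obtain ⟨j, hj⟩ := g_subset_C s
  exact nwd_of_subset hj (C_nwd j)

lemma g_subset_Icc (s : ℕ) : g s ⊆ Icc 0 1 := by
  obtain ⟨j, hj⟩ := g_subset_C s
  exact hj.trans (C_subset_Icc j)

lemma C_inter_closure_J {j j' k' : ℕ} (h : j ≤ j') :
    C j ∩ closure (J j' k') ⊆ T := by
  rintro x ⟨hC, hcl⟩
  rcases closure_J_subset j' k' hcl with hJ | hT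
  · exfalso
    have hxU : x ∈ U j' := mem_iUnion.2 ⟨k', hJ.1⟩
    have h0 := C_inter_U h
    rw [eq_empty_iff_forall_notMem] at h0
    exact h0 x ⟨hC, hxU⟩
  · exact hT

lemma g_inter_subset_T {s s' : ℕ} (h : s ≠ s') : g s ∩ g s' ⊆ T := by
  have key : ∀ a b : ℕ, a ≠ b → ∀ x, x ∈ g a → x ∈ g b → (a < b) → x ∈ T := by
    intro a b hab x hxa hxb _
    cases b with
    | zero => omega
    | succ sb =>
      set p' := Nat.pairEquiv.symm sb with hp'
      have hxb' : x ∈ C (p'.1 + 1) ∩ closure (J p'.1 p'.2) := hxb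
      cases a with
      | zero => exact C_inter_closure_J (Nat.zero_le _) ⟨hxa, hxb'.2⟩
      | succ sa =>
        set p := Nat.pairEquiv.symm sa with hp
        have hxa' : x ∈ C (p.1 + 1) ∩ closure (J p.1 p.2) := hxa
        rcases Nat.lt_trichotomy p.1 p'.1 with hj | hj | hj
        · exact C_inter_closure_J (by omega) ⟨C_mono (by omega : p.1+1 ≤ p'.1) hxa'.1, hxb'.2⟩
        · have hk : p.2 ≠ p'.2 := by
            intro hk
            apply hab
            have hpp : p = p' := Prod.ext hj hk
            have hsab : sa = sb := by
              have h2 := congrArg Nat.pairEquiv hpp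
              rwa [hp', hp, Equiv.apply_symm_apply, Equiv.apply_symm_apply] at h2
            omega
          rcases closure_J_subset p.1 p.2 hxa'.2 with h1 | h1
          · rcases closure_J_subset p'.1 p'.2 hxb'.2 with h2 | h2
            · exfalso
              have hd := J_disjoint (j := p.1) hk
              rw [eq_empty_iff_forall_notMem] at hd
              exact hd x ⟨h1, hj ▸ h2⟩
            · exact h2
          · exact h1
        · exact C_inter_closure_J (by omega) ⟨C_mono (by omega : p'.1+1 ≤ p.1) hxb'.1, hxa'.2⟩
  intro x hx
  rcases Nat.lt_trichotomy s s' with hlt | heq | hgt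
  · exact key s s' h x hx.1 hx.2 hlt
  · exact absurd heq h
  · exact key s' s h.symm x hx.2 hx.1 hgt

lemma cover : Icc 0 1 \ (T ∪ ⋂ j, U j) ⊆ ⋃ s, g s := by
  rintro x ⟨hx, hbad⟩
  rw [mem_union] at hbad
  push_neg at hbad
  obtain ⟨hT, hInt⟩ := hbad
  have hex : ∃ j, x ∈ C j := by
    have h : ¬ ∀ j, x ∈ U j := fun h => hInt (mem_iInter.2 h)
    push_neg at h
    obtain ⟨j, hj⟩ := h
    exact ⟨j, hx, hj⟩
  classical
  cases hfind : Nat.find hex with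
  | zero =>
      have hj0 : x ∈ C 0 := by rw [← hfind]; exact Nat.find_spec hex
      exact mem_iUnion.2 ⟨0, hj0⟩
  | succ m =>
      have hj : x ∈ C (m+1) := by rw [← hfind]; exact Nat.find_spec hex
      have hm : x ∉ C m := Nat.find_min hex (by omega)
      have hUm : x ∈ U m := by
        by_contra hU
        exact hm ⟨hx, hU⟩
      have hJm := U_diff_T_subset m ⟨hUm, hT⟩
      rw [mem_iUnion] at hJm
      obtain ⟨k, hk⟩ := hJm
      refine mem_iUnion.2 ⟨Nat.pairEquiv (m, k) + 1, ?_⟩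
      show x ∈ C ((Nat.pairEquiv.symm (Nat.pairEquiv (m,k))).1 + 1) ∩ _
      rw [Equiv.symm_apply_apply]
      exact ⟨hj, subset_closure hk⟩

/-! the final family -/

def e : ℤ ≃ ℕ := Denumerable.eqv ℤ

def F (n : ℤ) : Set ℝ := insert 0 (g (e n))

def E : Set ℝ := ⋃ n : ℤ, ((· + (n:ℝ)) '' F n)

lemma F_compact (n : ℤ) : IsCompact (F n) := (g_compact _).insert 0

lemma F_closed (n : ℤ) : IsClosed (F n) := (F_compact n).isClosed

lemma F_nwd (n : ℤ) : IsNowhereDense (F n) := by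
  have : F n = {(0:ℝ)} ∪ g (e n) := by rw [F, singleton_union]
  rw [this]
  exact nwd_union isClosed_singleton (g_closed _)
    (isClosed_singleton.isNowhereDense_iff.2 (interior_singleton 0)) (g_nwd _)

lemma F_subset_Icc (n : ℤ) : F n ⊆ Icc 0 1 := by
  rw [F, insert_subset_iff]
  exact ⟨by norm_num, g_subset_Icc _⟩


def A (n : ℤ) : Set ℝ := (· + (n:ℝ)) '' F n

lemma A_compact (n : ℤ) : IsCompact (A n) :=
  (F_compact n).image (continuous_add_right _)

lemma A_closed (n : ℤ) : IsClosed (A n) := (A_compact n).isClosed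

lemma A_subset (n : ℤ) : A n ⊆ Icc (n:ℝ) ((n:ℝ)+1) := by
  rintro x ⟨y, hy, rfl⟩
  have h := F_subset_Icc n hy
  have h1 := h.1; have h2 := h.2
  constructor <;> dsimp only <;> [linarith; linarith]

lemma A_nwd (n : ℤ) : IsNowhereDense (A n) := by
  rw [(A_closed n).isNowhereDense_iff]
  have h : A n = (Homeomorph.addRight ((n:ℝ))) '' F n := rfl
  rw [h, ← Homeomorph.image_interior]
  rw [(F_closed n).isNowhereDense_iff.1 (F_nwd n)]
  exact image_empty _

lemma vol_A (n : ℤ) : volume (A n) = volume (F n) := by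
  rw [A, Set.image_add_right, measure_preimage_add_right]

lemma E_closed : IsClosed E := by
  apply LocallyFinite.isClosed_iUnion _ A_closed
  intro x
  refine ⟨Metric.ball x 1, Metric.ball_mem_nhds x one_pos, ?_⟩
  apply Set.Finite.subset (Set.finite_Icc (⌈x-2⌉) (⌊x+1⌋))
  rintro n ⟨z, hzA, hzb⟩
  have h1 := A_subset n hzA
  have h2 : |z - x| < 1 := by simpa [Real.dist_eq] using hzb
  rw [abs_lt] at h2
  constructor
  · exact Int.ceil_le.2 (by linarith [h1.2])
  · exact Int.le_floor.2 (by linarith [h1.1])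

lemma E_nwd : IsNowhereDense E := by
  rw [E_closed.isNowhereDense_iff, eq_empty_iff_forall_notMem]
  intro x hx
  rw [mem_interior_iff_mem_nhds, Metric.mem_nhds_iff] at hx
  obtain ⟨ε, hε, hball⟩ := hx
  set δ := min ε 1 with hδ
  have hδ0 : 0 < δ := lt_min hε one_pos
  have hsub : Metric.ball x δ ⊆ ⋃ n ∈ Finset.Icc (⌈x-2⌉) (⌊x+1⌋), A n := by
    intro z hz
    have hzE : z ∈ E := hball (Metric.ball_subset_ball (min_le_left _ _) hz)
    rw [E, mem_iUnion] at hzE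
    obtain ⟨n, hn⟩ := hzE
    have h1 := A_subset n hn
    have h2 : |z - x| < 1 := by
      have := mem_ball_iff_norm.1 hz
      have : |z - x| < δ := by simpa [Real.norm_eq_abs] using this
      exact lt_of_lt_of_le this (min_le_right _ _)
    rw [abs_lt] at h2
    refine mem_iUnion₂.2 ⟨n, Finset.mem_Icc.2 ⟨?_, ?_⟩, hn⟩
    · exact Int.ceil_le.2 (by linarith [h1.2])
    · exact Int.le_floor.2 (by linarith [h1.1])
  have := open_subset_finite_nwd (Finset.Icc (⌈x-2⌉) (⌊x+1⌋)) A A_closed A_nwd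
    (Metric.ball x δ) Metric.isOpen_ball hsub
  rw [eq_empty_iff_forall_notMem] at this
  exact this x (Metric.mem_ball_self hδ0)

lemma int_mem_E (n : ℤ) : (n:ℝ) ∈ E :=
  mem_iUnion.2 ⟨n, ⟨0, mem_insert 0 _, by simp⟩⟩

lemma E_unbounded : ¬ Bornology.IsBounded E := by
  intro hb
  obtain ⟨c, hc⟩ := isBounded_iff_forall_norm_le.1 hb
  have h1 := hc _ (int_mem_E (⌈c⌉ + 1))
  rw [Real.norm_eq_abs] at h1
  have h2 : c ≤ (⌈c⌉:ℝ) := Int.le_ceil c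
  have h3 : ((⌈c⌉:ℤ):ℝ) + 1 ≤ |((⌈c⌉ + 1 : ℤ):ℝ)| := by
    push_cast
    exact le_abs_self _
  push_cast at h1 h3
  linarith

lemma E_measurable : MeasurableSet E :=
  MeasurableSet.iUnion fun n => (A_closed n).measurableSet

lemma vol_F_le (n : ℤ) : volume (F n) ≤ volume (g (e n)) := by
  rw [F, ← singleton_union]
  calc volume ({(0:ℝ)} ∪ g (e n)) ≤ volume ({(0:ℝ)} : Set ℝ) + volume (g (e n)) :=
        measure_union_le _ _
    _ = volume (g (e n)) := by simp

lemma vol_g_sum_le : ∑' s : ℕ, volume (g s) ≤ 1 := by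
  have hdisj : Pairwise (Function.onFun (AEDisjoint volume) g) := by
    intro s s' h
    exact measure_mono_null (g_inter_subset_T h) T_null
  have hnm : ∀ s, NullMeasurableSet (g s) volume :=
    fun s => (g_closed s).measurableSet.nullMeasurableSet
  rw [← measure_iUnion₀ hdisj hnm]
  calc volume (⋃ s, g s) ≤ volume (Icc (0:ℝ) 1) :=
        measure_mono (iUnion_subset g_subset_Icc)
    _ = 1 := by rw [Real.volume_Icc]; norm_num

lemma vol_E_lt_top : volume E < ⊤ := by
  have h1 : volume E ≤ ∑' n : ℤ, volume (A n) := measure_iUnion_le _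
  have h2 : ∑' n : ℤ, volume (A n) ≤ ∑' n : ℤ, volume (g (e n)) := by
    apply ENNReal.tsum_le_tsum
    intro n; rw [vol_A]; exact vol_F_le n
  have h3 : ∑' n : ℤ, volume (g (e n)) = ∑' s : ℕ, volume (g s) :=
    e.tsum_eq (fun s => volume (g s))
  calc volume E ≤ ∑' s : ℕ, volume (g s) := le_trans h1 (le_trans h2 (le_of_eq h3))
    _ ≤ 1 := vol_g_sum_le
    _ < ⊤ := by norm_num

lemma vol_C0 : (2:ℝ≥0∞)⁻¹ ≤ volume (C 0) := by
  have h1 := measure_le_inter_add_diff volume (Icc (0:ℝ) 1) (U 0)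
  have h2 : volume (Icc (0:ℝ) 1 ∩ U 0) ≤ (2:ℝ≥0∞)⁻¹ := by
    refine le_trans (measure_mono inter_subset_right) ?_
    simpa using vol_U_le 0
  have h3 : volume (Icc (0:ℝ) 1) = 1 := by rw [Real.volume_Icc]; norm_num
  rw [h3] at h1
  have h4 : (1:ℝ≥0∞) ≤ 2⁻¹ + volume (C 0) :=
    le_trans h1 (add_le_add h2 (le_refl _))
  -- 1 - 2⁻¹ = 2⁻¹ ≤ volume (C 0)
  have h5 : (2:ℝ≥0∞)⁻¹ + 2⁻¹ ≤ 2⁻¹ + volume (C 0) := by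
    rw [ENNReal.inv_two_add_inv_two]; exact h4
  exact (ENNReal.add_le_add_iff_left (by norm_num)).1 h5

lemma vol_E_pos : 0 < volume E := by
  have h1 : (fun x => x + ((e.symm 0 : ℤ):ℝ)) '' (g 0) ⊆ E := by
    apply subset_trans _ (subset_iUnion _ (e.symm 0))
    apply image_mono
    rw [F, Equiv.apply_symm_apply]
    exact subset_insert _ _
  have h2 : volume ((fun x => x + ((e.symm 0 : ℤ):ℝ)) '' (g 0)) = volume (g 0) := by
    rw [Set.image_add_right, measure_preimage_add_right]
  calc (0:ℝ≥0∞) < 2⁻¹ := by norm_num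
    _ ≤ volume (C 0) := vol_C0
    _ = volume ((fun x => x + ((e.symm 0 : ℤ):ℝ)) '' (g 0)) := by rw [h2]; rfl
    _ ≤ volume E := measure_mono h1

/-! a.e. statements -/

def B : Set ℝ := {0} ∪ T ∪ (Icc 0 1 ∩ ⋂ j, U j)

lemma B_null : volume B = 0 := by
  rw [B]
  apply measure_union_null
  · apply measure_union_null
    · simp
    · exact T_null
  · exact measure_mono_null inter_subset_right vol_iInter_U

lemma B_measurable : MeasurableSet B := by
  apply MeasurableSet.union
  · exact (measurableSet_singleton 0).union (T_countable.measurableSet)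
  · exact measurableSet_Icc.inter (MeasurableSet.iInter fun j => (U_open j).measurableSet)

/-- pointwise version of the second a.e. statement -/
lemma tsum_F_eq {x : ℝ} (hx : x ∉ B) :
    (∑' n : ℤ, Set.indicator (F n) (fun _ => (1 : ℝ)) x)
      = Set.indicator (Set.Icc (0 : ℝ) 1) (fun _ => (1 : ℝ)) x := by
  have hx0 : x ≠ 0 := fun h => hx (Or.inl (Or.inl (by simp [h])))
  have hxT : x ∉ T := fun h => hx (Or.inl (Or.inr h))
  by_cases hxI : x ∈ Icc (0:ℝ) 1
  · have hxU : x ∉ ⋂ j, U j := fun h => hx (Or.inr ⟨hxI, h⟩)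
    have hcov : x ∈ ⋃ s, g s := cover ⟨hxI, fun h => h.elim hxT hxU⟩
    obtain ⟨s₀, hs₀⟩ := mem_iUnion.1 hcov
    have huniq : ∀ s, s ≠ s₀ → x ∉ g s := by
      intro s hs hxs
      exact hxT (g_inter_subset_T hs ⟨hxs, hs₀⟩)
    rw [indicator_of_mem hxI]
    rw [tsum_eq_single (e.symm s₀) ?_]
    · apply indicator_of_mem
      rw [F, Equiv.apply_symm_apply]
      exact mem_insert_of_mem _ hs₀
    · intro n hn
      apply indicator_of_notMem
      rw [F, mem_insert_iff]
      push_neg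
      refine ⟨hx0, huniq _ ?_⟩
      intro h
      exact hn (by rw [← h, Equiv.symm_apply_apply])
  · rw [indicator_of_notMem hxI]
    rw [tsum_eq_single 0 ?_]
    · exact indicator_of_notMem (fun h => hxI (F_subset_Icc 0 h)) _
    · intro n _
      exact indicator_of_notMem (fun h => hxI (F_subset_Icc n h)) _

lemma ae_F : ∀ᵐ x : ℝ, (∑' n : ℤ, Set.indicator (F n) (fun _ => (1 : ℝ)) x)
    = Set.indicator (Set.Icc (0 : ℝ) 1) (fun _ => (1 : ℝ)) x := by
  have h : ∀ᵐ x : ℝ, x ∉ B := by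
    rw [ae_iff]
    simpa using B_null
  filter_upwards [h] with x hx
  exact tsum_F_eq hx

/-- the bad set for the tiling statement -/
def B2 : Set ℝ := (⋃ n : ℤ, ((· + (n:ℝ)) '' B))

lemma B2_null : volume B2 = 0 := by
  apply measure_iUnion_null
  intro n
  rw [Set.image_add_right, measure_preimage_add_right]
  exact B_null

lemma mem_E_iff {x : ℝ} (hfr : Int.fract x ≠ 0) (n : ℤ) :
    x - (n:ℝ) ∈ E ↔ Int.fract x ∈ F (⌊x⌋ - n) := by
  constructor
  · intro h
    rw [E, mem_iUnion] at h
    obtain ⟨m, y, hyF, hy⟩ := h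
    have hy' : y + (m:ℝ) = x - n := hy
    have hyI : y ∈ Icc (0:ℝ) 1 := F_subset_Icc m hyF
    have hxl : x - ((n + m : ℤ):ℝ) = y := by push_cast; linarith
    -- conclude n + m = ⌊x⌋
    have h0 : (0:ℝ) ≤ x - ((n+m:ℤ):ℝ) := hxl ▸ hyI.1
    have h1 : x - ((n+m:ℤ):ℝ) ≤ 1 := hxl ▸ hyI.2
    have hne0 : x - ((n+m:ℤ):ℝ) ≠ 0 := by
      intro hc
      apply hfr
      have : x = ((n+m:ℤ):ℝ) := by linarith
      rw [this, Int.fract_intCast]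
    have hne1 : x - ((n+m:ℤ):ℝ) ≠ 1 := by
      intro hc
      apply hfr
      have : x = ((n+m+1:ℤ):ℝ) := by push_cast at hc ⊢; linarith
      rw [this, Int.fract_intCast]
    have hfloor : ⌊x⌋ = n + m := by
      rw [Int.floor_eq_iff]
      constructor
      · push_cast; rcases lt_or_eq_of_le h0 with h|h; · linarith
        · exact absurd h.symm hne0
      · push_cast
        rcases lt_or_eq_of_le h1 with h|h; · linarith
        · exact absurd h hne1
    have hm : m = ⌊x⌋ - n := by omega
    have hy2 : Int.fract x = y := by
      rw [← Int.self_sub_floor, hfloor]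
      push_cast
      linarith
    rw [hy2, ← hm]
    exact hyF
  · intro h
    rw [E, mem_iUnion]
    refine ⟨⌊x⌋ - n, Int.fract x, h, ?_⟩
    have := Int.fract_add_floor x
    push_cast
    linarith

lemma ae_E : ∀ᵐ x : ℝ, (∑' n : ℤ, Set.indicator E (fun _ => (1 : ℝ)) (x - (n : ℝ))) = 1 := by
  have h1 : ∀ᵐ x : ℝ, x ∉ B2 := by
    rw [ae_iff]; simpa using B2_null
  filter_upwards [h1] with x hx
  have hfr : Int.fract x ∉ B := by
    intro h
    apply hx
    rw [B2, mem_iUnion]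
    refine ⟨⌊x⌋, Int.fract x, h, Int.fract_add_floor x⟩
  have hfr0 : Int.fract x ≠ 0 := fun h => hfr (Or.inl (Or.inl (by simp [h])))
  have key : ∀ n : ℤ, Set.indicator E (fun _ => (1:ℝ)) (x - (n:ℝ))
      = Set.indicator (F (⌊x⌋ - n)) (fun _ => (1:ℝ)) (Int.fract x) := by
    intro n
    by_cases h : x - (n:ℝ) ∈ E
    · rw [indicator_of_mem h, indicator_of_mem ((mem_E_iff hfr0 n).1 h)]
    · rw [indicator_of_notMem h,
        indicator_of_notMem (fun hc => h ((mem_E_iff hfr0 n).2 hc))]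
  calc ∑' n : ℤ, Set.indicator E (fun _ => (1:ℝ)) (x - (n:ℝ))
      = ∑' n : ℤ, Set.indicator (F (⌊x⌋ - n)) (fun _ => (1:ℝ)) (Int.fract x) := by
        exact tsum_congr key
    _ = ∑' m : ℤ, Set.indicator (F m) (fun _ => (1:ℝ)) (Int.fract x) := by
        exact (Equiv.subLeft ⌊x⌋).tsum_eq
          (fun m => Set.indicator (F m) (fun _ => (1:ℝ)) (Int.fract x))
    _ = Set.indicator (Set.Icc (0:ℝ) 1) (fun _ => (1:ℝ)) (Int.fract x) := tsum_F_eq hfr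
    _ = 1 := by
        rw [indicator_of_mem (mem_Icc.2 ⟨Int.fract_nonneg x, le_of_lt (Int.fract_lt_one x)⟩)]

lemma F_inter_null {n m : ℤ} (h : n ≠ m) : volume (F n ∩ F m) = 0 := by
  have hsub : F n ∩ F m ⊆ {(0:ℝ)} ∪ T := by
    rintro x ⟨hx1, hx2⟩
    rcases mem_insert_iff.1 hx1 with rfl | hx1'
    · exact Or.inl rfl
    rcases mem_insert_iff.1 hx2 with rfl | hx2'
    · exact Or.inl rfl
    have hne : e n ≠ e m := fun hc => h (e.injective hc)
    exact Or.inr (g_inter_subset_T hne ⟨hx1', hx2'⟩)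
  apply measure_mono_null hsub
  apply measure_union_null
  · simp
  · exact T_null

end FatTile

/-- There exists an unbounded, nowhere dense set `E ⊂ ℝ` of finite positive measure
which tiles `ℝ` by `ℤ`-translates; it may be taken of the form `E = ⋃ₙ (Eₙ + n)` where
the `Eₙ` are nowhere dense compact subsets of `[0,1]` partitioning `[0,1]` a.e. -/
theorem exists_unbounded_nowhere_dense_tile :
    ∃ E : Set ℝ, MeasurableSet E ∧ IsNowhereDense E ∧
      ¬ Bornology.IsBounded E ∧ 0 < volume E ∧ volume E < ⊤ ∧
      (∀ᵐ x : ℝ, (∑' n : ℤ, Set.indicator E (fun _ => (1 : ℝ)) (x - (n : ℝ))) = 1) ∧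
      ∃ F : ℤ → Set ℝ,
        (∀ n, IsCompact (F n) ∧ IsNowhereDense (F n) ∧ F n ⊆ Set.Icc (0 : ℝ) 1) ∧
        (∀ n m, n ≠ m → volume (F n ∩ F m) = 0) ∧
        (∀ᵐ x : ℝ, (∑' n : ℤ, Set.indicator (F n) (fun _ => (1 : ℝ)) x)
          = Set.indicator (Set.Icc (0 : ℝ) 1) (fun _ => (1 : ℝ)) x) ∧
        E = ⋃ n : ℤ, ((· + (n : ℝ)) '' F n) := by
  exact ⟨FatTile.E, FatTile.E_measurable, FatTile.E_nwd, FatTile.E_unbounded,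
    FatTile.vol_E_pos, FatTile.vol_E_lt_top, FatTile.ae_E, FatTile.F,
    fun n => ⟨FatTile.F_compact n, FatTile.F_nwd n, FatTile.F_subset_Icc n⟩,
    fun n m h => FatTile.F_inter_null h, FatTile.ae_F, rfl⟩

end
end
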